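/- arXiv:2105.10225 — 2 statements merged into one kernel-verified Lean document; each statement's English description precedes it below -/
import Mathlib

section
/- Let f be an optimal integer flow of the network D, y an optimal node potential, and D' the reduced network. Then an integer function f' on A' is a feasible integer flow of D' if and only if the combined flow f*, defined by f*(a) = f'(a) for a∈A' and f*(a) = f(a) for a∈X, is an optimal integer flow of D. -/
open scoped Classical
noncomputable section

/-- A network: finite directed graph with arc set `A`, lower/upper capacities `l`, `u`,
node balances `b` and arc costs `c`. -/
structure Network (V : Type) [Fintype V] [DecidableEq V] where
  A : Finset (V × V)
  l : V × V → ℤ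
  u : V × V → ℤ
  b : V → ℤ
  c : V × V → ℝ

variable {V : Type} [Fintype V] [DecidableEq V]

namespace Network

/-- No anti-parallel arcs, and `0 ≤ l ≤ u` on every arc. -/
def Wellformed (N : Network V) : Prop :=
  (∀ a ∈ N.A, (a.2, a.1) ∉ N.A) ∧ ∀ a ∈ N.A, 0 ≤ N.l a ∧ N.l a ≤ N.u a

/-- A feasible integer flow: capacity constraints, vanishing outside `A`, flow balance. -/
def Feasible (N : Network V) (f : V × V → ℤ) : Prop :=
  (∀ a ∈ N.A, N.l a ≤ f a ∧ f a ≤ N.u a) ∧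
  (∀ a, a ∉ N.A → f a = 0) ∧
  ∀ i : V, ((∑ a ∈ N.A.filter fun a => a.1 = i, f a)
         - ∑ a ∈ N.A.filter fun a => a.2 = i, f a) = N.b i

/-- The cost of a flow. -/
def cost (N : Network V) (f : V × V → ℤ) : ℝ := ∑ a ∈ N.A, N.c a * (f a : ℝ)

/-- A flow is optimal if it is feasible of minimum cost. -/
def Optimal (N : Network V) (f : V × V → ℤ) : Prop :=
  N.Feasible f ∧ ∀ g, N.Feasible g → N.cost f ≤ N.cost g

/-- The arc set `A_f` of the residual graph `D_f`. -/
def resArcs (N : Network V) (f : V × V → ℤ) : Finset (V × V) :=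
  N.A.filter (fun a => f a < N.u a) ∪ (N.A.filter fun a => N.l a < f a).image Prod.swap

/-- Residual cost of a residual arc: `c_{ij}` on forward arcs, `-c_{ji}` on backward arcs. -/
def resCost (N : Network V) (a : V × V) : ℝ :=
  if a ∈ N.A then N.c a else -N.c (a.2, a.1)

/-- Residual capacity of a residual arc. -/
def resCap (N : Network V) (f : V × V → ℤ) (a : V × V) : ℤ :=
  if a ∈ N.A then N.u a - f a else f (a.2, a.1) - N.l (a.2, a.1)

/-- Reduced cost of an arc of `A` w.r.t. node potentials `y`. -/
def redCost (N : Network V) (y : V → ℝ) (a : V × V) : ℝ := N.c a + y a.1 - y a.2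

/-- Residual reduced cost of a residual arc w.r.t. node potentials `y`. -/
def resRedCost (N : Network V) (y : V → ℝ) (a : V × V) : ℝ := N.resCost a + y a.1 - y a.2

/-- `y` is an optimal node potential for `f`. -/
def OptPotential (N : Network V) (f : V × V → ℤ) (y : V → ℝ) : Prop :=
  ∀ a ∈ N.resArcs f, 0 ≤ N.resRedCost y a

end Network

/-- A (simple, directed) cycle: a nonempty duplicate-free list of at least two vertices,
traversed cyclically. -/
structure Cyc (V : Type) where
  verts : List V
  nodup : verts.Nodup
  two_le : 2 ≤ verts.length

/-- The arcs of a cycle: consecutive (cyclic) pairs of vertices. -/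
def Cyc.arcs (C : Cyc V) : Finset (V × V) :=
  (C.verts.zip (C.verts.rotate 1)).toFinset

/-- A cycle is proper if it contains no pair of anti-parallel arcs. -/
def Cyc.Proper (C : Cyc V) : Prop := ∀ a ∈ C.arcs, (a.2, a.1) ∉ C.arcs

/-- The incidence vector `χ(C)` of a cycle. -/
def Cyc.chi (C : Cyc V) : V × V → ℤ :=
  fun a => if a ∈ C.arcs then 1 else if (a.2, a.1) ∈ C.arcs then -1 else 0

namespace Network

/-- `C` is a directed cycle of the residual graph `D_f`. -/
def IsResCycle (N : Network V) (f : V × V → ℤ) (C : Cyc V) : Prop :=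
  ∀ a ∈ C.arcs, a ∈ N.resArcs f

/-- The cost `c(f,C)` of a cycle in the residual graph. -/
def cycCost (N : Network V) (C : Cyc V) : ℝ := ∑ a ∈ C.arcs, N.resCost a

end Network

namespace Network

/-- The incidence vector `χ(C) ∈ {−1,0,1}^A` of a residual cycle, as a vector indexed by
the arcs of the network (zero outside `A`). -/
def chi (N : Network V) (C : Cyc V) : V × V → ℤ :=
  fun a => if a ∈ N.A then C.chi a else 0

end Network

namespace Network

/-- The reduced network `D' = (V, A∖X)` where `X` is the set of arcs with nonzero reduced
cost, with balances adapted by the flow `f` on the removed arcs. -/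
def reduced (N : Network V) (f : V × V → ℤ) (y : V → ℝ) : Network V where
  A := N.A.filter fun a => N.redCost y a = 0
  l := N.l
  u := N.u
  c := N.c
  b := fun i =>
    N.b i
      - ∑ a ∈ (N.A.filter fun a => N.redCost y a ≠ 0).filter (fun a => a.1 = i), f a
      + ∑ a ∈ (N.A.filter fun a => N.redCost y a ≠ 0).filter (fun a => a.2 = i), f a

end Network

/-!
With respect to any potential `y`, the cost of a feasible flow `g` is `∑ c̄ₐ gₐ` minus a
constant depending only on the balances. If `y` is optimal for `f`, complementary slackness says
that `f` minimises every term `c̄ₐ gₐ` over the capacity interval of `a`; hence a feasible flow that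
agrees with `f` on `X` (the arcs with `c̄ₐ ≠ 0`) is optimal. Feasibility of such a flow in `D` is
exactly feasibility of its restriction in `D'`, whose balances absorb the flow of `f` on `X`.
-/

theorem Finset.sum_mul_sum_fiber {ι κ R : Type*} [Fintype κ] [DecidableEq κ]
    [NonUnitalNonAssocSemiring R] (s : Finset ι) (p : ι → κ) (w : κ → R) (g : ι → R) :
    ∑ i, w i * ∑ a ∈ s.filter (fun a => p a = i), g a = ∑ a ∈ s, w (p a) * g a := by
  rw [← Finset.sum_fiberwise s p (fun a => w (p a) * g a)]
  refine Finset.sum_congr rfl fun i _ => ?_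
  rw [Finset.mul_sum]
  exact Finset.sum_congr rfl fun a ha => by rw [(Finset.mem_filter.1 ha).2]

namespace Network

variable {N : Network V} {f g : V × V → ℤ} {y : V → ℝ}

theorem Feasible.cost_eq (hg : N.Feasible g) (y : V → ℝ) :
    N.cost g = ∑ a ∈ N.A, N.redCost y a * g a - ∑ i, y i * N.b i := by
  have hb : ∑ i, y i * (N.b i : ℝ)
      = ∑ a ∈ N.A, y a.1 * (g a : ℝ) - ∑ a ∈ N.A, y a.2 * (g a : ℝ) := by
    simp_rw [← hg.2.2, Int.cast_sub, Int.cast_sum, mul_sub, Finset.sum_sub_distrib,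
      Finset.sum_mul_sum_fiber]
  rw [hb, cost]
  simp only [redCost, ← Finset.sum_sub_distrib]
  exact Finset.sum_congr rfl fun a _ => by ring

theorem OptPotential.redCost_nonpos (hN : ∀ a ∈ N.A, (a.2, a.1) ∉ N.A)
    (hy : N.OptPotential f y) {a : V × V} (ha : a ∈ N.A) (hlf : N.l a < f a) :
    N.redCost y a ≤ 0 := by
  have hres := hy (a.2, a.1) <| Finset.mem_union_right _ <|
    Finset.mem_image.2 ⟨a, Finset.mem_filter.2 ⟨ha, hlf⟩, rfl⟩
  simp only [resRedCost, resCost, if_neg (hN a ha)] at hres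
  simp only [redCost]
  linarith

theorem OptPotential.redCost_nonneg (hy : N.OptPotential f y) {a : V × V} (ha : a ∈ N.A)
    (hfu : f a < N.u a) : 0 ≤ N.redCost y a := by
  have hres := hy a <| Finset.mem_union_left _ <| Finset.mem_filter.2 ⟨ha, hfu⟩
  simpa only [resRedCost, resCost, if_pos ha, redCost] using hres

theorem OptPotential.redCost_mul_le (hN : ∀ a ∈ N.A, (a.2, a.1) ∉ N.A)
    (hy : N.OptPotential f y) {a : V × V} (ha : a ∈ N.A) (hlg : N.l a ≤ g a)
    (hgu : g a ≤ N.u a) :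
    N.redCost y a * f a ≤ N.redCost y a * g a := by
  rcases lt_trichotomy (g a) (f a) with hgf | hgf | hfg
  · exact mul_le_mul_of_nonpos_left (by exact_mod_cast hgf.le)
      (hy.redCost_nonpos hN ha (hlg.trans_lt hgf))
  · rw [hgf]
  · exact mul_le_mul_of_nonneg_left (by exact_mod_cast hfg.le)
      (hy.redCost_nonneg ha (hfg.trans_le hgu))

theorem OptPotential.optimal_of_eq_on_redCost_ne_zero (hN : ∀ a ∈ N.A, (a.2, a.1) ∉ N.A)
    (hy : N.OptPotential f y) {F : V × V → ℤ} (hF : N.Feasible F)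
    (hFf : ∀ a ∈ N.A, N.redCost y a ≠ 0 → F a = f a) : N.Optimal F := by
  refine ⟨hF, fun g hg => ?_⟩
  have hFf_sum : ∑ a ∈ N.A, N.redCost y a * F a = ∑ a ∈ N.A, N.redCost y a * f a :=
    Finset.sum_congr rfl fun a ha => by
      by_cases h : N.redCost y a = 0
      · simp [h]
      · rw [hFf a ha h]
  have hfg : ∑ a ∈ N.A, N.redCost y a * f a ≤ ∑ a ∈ N.A, N.redCost y a * g a :=
    Finset.sum_le_sum fun a ha => hy.redCost_mul_le hN ha (hg.1 a ha).1 (hg.1 a ha).2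
  rw [hF.cost_eq y, hg.cost_eq y]
  linarith

variable {f' : V × V → ℤ}

theorem sum_filter_reduced_ite (q : V × V → Prop) [DecidablePred q] :
    ∑ a ∈ N.A.filter q, (if a ∈ (N.reduced f y).A then f' a else f a)
      = ∑ a ∈ (N.reduced f y).A.filter q, f' a
        + ∑ a ∈ (N.A.filter fun a => N.redCost y a ≠ 0).filter q, f a := by
  rw [Finset.sum_ite]
  congr 2 <;> ext a <;> simp only [reduced, Finset.mem_filter] <;> tauto

theorem reduced_balance_iff (i : V) :
    (∑ a ∈ (N.reduced f y).A.filter (fun a => a.1 = i), f' a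
        - ∑ a ∈ (N.reduced f y).A.filter (fun a => a.2 = i), f' a = (N.reduced f y).b i) ↔
      (∑ a ∈ N.A.filter (fun a => a.1 = i), (if a ∈ (N.reduced f y).A then f' a else f a)
        - ∑ a ∈ N.A.filter (fun a => a.2 = i), (if a ∈ (N.reduced f y).A then f' a else f a)
        = N.b i) := by
  rw [sum_filter_reduced_ite, sum_filter_reduced_ite]
  simp only [reduced]
  constructor <;> intro h <;> linarith

theorem reduced_feasible_iff (hf : N.Feasible f) (hf'0 : ∀ a ∉ (N.reduced f y).A, f' a = 0) :
    (N.reduced f y).Feasible f' ↔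
      N.Feasible (fun a => if a ∈ (N.reduced f y).A then f' a else f a) := by
  have hA' : ∀ a ∈ (N.reduced f y).A, a ∈ N.A := fun a ha => (Finset.mem_filter.1 ha).1
  constructor
  · rintro ⟨hcap, -, hbal⟩
    refine ⟨fun a ha => ?_, fun a ha => ?_, fun i => (reduced_balance_iff i).1 (hbal i)⟩
    · dsimp only
      split_ifs with h
      exacts [hcap a h, hf.1 a ha]
    · simp only [if_neg (mt (hA' a) ha)]
      exact hf.2.1 a ha
  · rintro ⟨hcap, -, hbal⟩
    refine ⟨fun a ha => ?_, hf'0, fun i => (reduced_balance_iff i).2 (hbal i)⟩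
    have h := hcap a (hA' a ha)
    dsimp only at h
    rwa [if_pos ha] at h

end Network

/-- Let `f` be an optimal integer flow of `D`, `y` an optimal node potential and `D'` the
reduced network. An integer function `f'` on `A'` is a feasible flow of `D'` iff the
combined flow `f*` (equal to `f'` on `A'` and to `f` on `X`) is an optimal flow of `D`. -/
theorem reduced_feasible_iff_optimal (N : Network V) (hN : N.Wellformed)
    (f : V × V → ℤ) (hf : N.Optimal f) (y : V → ℝ) (hy : N.OptPotential f y)
    (f' : V × V → ℤ) (hf'0 : ∀ a ∉ (N.reduced f y).A, f' a = 0) :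
    (N.reduced f y).Feasible f' ↔
      N.Optimal (fun a => if a ∈ (N.reduced f y).A then f' a else f a) := by
  rw [Network.reduced_feasible_iff hf.1 hf'0]
  refine ⟨fun hF => hy.optimal_of_eq_on_redCost_ne_zero hN.1 hF fun a _ h => ?_, And.left⟩
  exact if_neg fun ha' : a ∈ (N.reduced f y).A => h (Finset.mem_filter.1 ha').2
end
end

section
/- Let f be an optimal integer flow of the network D, y an optimal node potential, and D' the reduced network. Then for every proper directed cycle C in the residual graph D'_f of D' with respect to (the restriction of) f, the flow f + χ(C) (extending χ(C) by 0 on arcs of X) is an optimal integer flow of D different from f. -/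
open scoped Classical
noncomputable section

variable {V : Type} [Fintype V] [DecidableEq V]

/-!
Every arc of a residual cycle `C` of the reduced network is an arc of `D` or the reversal of
one, and has reduced cost zero. Since `D` has no anti-parallel arcs and `C` is proper, pushing
one unit along `C` respects the capacities, and it preserves the balances because `C` is a
closed walk. Its cost change is the cost of `C`, which equals the sum of the residual reduced
costs over `C` (the potential terms telescope around the cycle), hence zero: `f + χ(C)` is
feasible of the same cost as `f`.
-/

namespace Cyc

omit [Fintype V] [DecidableEq V] in
theorem zip_rotate_nodup (C : Cyc V) : (C.verts.zip (C.verts.rotate 1)).Nodup := by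
  have h : (C.verts.zip (C.verts.rotate 1)).map Prod.fst = C.verts :=
    List.map_fst_zip (by simp)
  exact (h ▸ C.nodup).of_map _

omit [Fintype V] in
theorem arcs_nonempty (C : Cyc V) : C.arcs.Nonempty := by
  have : 0 < (C.verts.zip (C.verts.rotate 1)).length := by
    have := C.two_le
    simp only [List.length_zip, List.length_rotate, min_self]
    omega
  obtain ⟨e, he⟩ := List.exists_mem_of_length_pos this
  exact ⟨e, List.mem_toFinset.mpr he⟩

omit [Fintype V] in
theorem sum_arcs_sub_eq_zero {M : Type*} [AddCommGroup M] (C : Cyc V) (g : V → M) :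
    ∑ e ∈ C.arcs, (g e.1 - g e.2) = 0 := by
  have hfst : ∑ e ∈ C.arcs, g e.1 = (C.verts.map g).sum := by
    rw [arcs, List.sum_toFinset _ C.zip_rotate_nodup, ← Function.comp_def g Prod.fst,
      ← List.map_map, List.map_fst_zip (by simp)]
  have hsnd : ∑ e ∈ C.arcs, g e.2 = (C.verts.map g).sum := by
    rw [arcs, List.sum_toFinset _ C.zip_rotate_nodup, ← Function.comp_def g Prod.snd,
      ← List.map_map, List.map_snd_zip (by simp), List.map_rotate,
      (List.rotate_perm _ _).sum_eq]
  rw [Finset.sum_sub_distrib, hfst, hsnd, sub_self]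

omit [Fintype V] in
theorem chi_of_mem {C : Cyc V} {a : V × V} (ha : a ∈ C.arcs) : C.chi a = 1 :=
  if_pos ha

omit [Fintype V] in
theorem chi_of_swap_mem {C : Cyc V} (hC : C.Proper) {a : V × V} (ha : (a.2, a.1) ∈ C.arcs) :
    C.chi a = -1 := by
  have : a ∉ C.arcs := hC _ ha
  simp [chi, this, ha]

omit [Fintype V] in
theorem chi_of_notMem {C : Cyc V} {a : V × V} (h₁ : a ∉ C.arcs) (h₂ : (a.2, a.1) ∉ C.arcs) :
    C.chi a = 0 := by
  simp [chi, h₁, h₂]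

end Cyc

namespace Network

variable (N : Network V)

theorem mem_resArcs {f : V × V → ℤ} {e : V × V} :
    e ∈ N.resArcs f ↔
      e ∈ N.A ∧ f e < N.u e ∨ (e.2, e.1) ∈ N.A ∧ N.l (e.2, e.1) < f (e.2, e.1) := by
  simp only [resArcs, Finset.mem_union, Finset.mem_filter, Finset.mem_image]
  refine or_congr Iff.rfl ⟨?_, fun h => ⟨(e.2, e.1), h, rfl⟩⟩
  rintro ⟨a, ha, rfl⟩
  exact ha

theorem IsResCycle.mem_or_swap_mem {N : Network V} {f : V × V → ℤ} {C : Cyc V}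
    (hC : N.IsResCycle f C) {e : V × V} (he : e ∈ C.arcs) : e ∈ N.A ∨ (e.2, e.1) ∈ N.A :=
  (N.mem_resArcs.mp (hC e he)).imp And.left And.left

/-- Pairing every arc `e` of `C` with the arc of `D` it traverses (`e` itself or its
reversal) turns a sum against `χ(C)` into a sum over `C`. -/
theorem sum_chi_smul {M : Type*} [AddCommGroup M] (hanti : ∀ a ∈ N.A, (a.2, a.1) ∉ N.A)
    {C : Cyc V} (hC : C.Proper) (hCA : ∀ e ∈ C.arcs, e ∈ N.A ∨ (e.2, e.1) ∈ N.A)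
    (w : V × V → M) :
    ∑ a ∈ N.A, N.chi C a • w a = ∑ e ∈ C.arcs, if e ∈ N.A then w e else -w (e.2, e.1) := by
  have hchi : ∀ {a}, a ∈ N.A → N.chi C a = C.chi a := fun ha => if_pos ha
  symm
  refine Finset.sum_bij_ne_zero (fun e _ _ => if e ∈ N.A then e else (e.2, e.1)) ?_ ?_ ?_ ?_
  · intro e he _
    split_ifs with h
    exacts [h, (hCA e he).resolve_left h]
  · intro e₁ h₁ _ e₂ h₂ _
    split_ifs with he₁ he₂ he₂ <;> intro h
    · exact h
    · exact absurd (h ▸ h₁) (hC e₂ h₂)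
    · exact absurd (h ▸ h₂) (hC e₁ h₁)
    · simp only [Prod.mk.injEq] at h
      exact Prod.ext h.2 h.1
  · intro a ha hne
    by_cases h : a ∈ C.arcs
    · exact ⟨a, h, by simpa [ha] using right_ne_zero_of_smul hne, if_pos ha⟩
    · have h' : (a.2, a.1) ∈ C.arcs := by
        by_contra h'
        simp [hchi ha, Cyc.chi_of_notMem h h'] at hne
      exact ⟨(a.2, a.1), h', by simpa [hanti a ha] using right_ne_zero_of_smul hne,
        if_neg (hanti a ha)⟩
  · intro e he _
    split_ifs with h
    · simp [hchi h, Cyc.chi_of_mem he]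
    · have h' := (hCA e he).resolve_left h
      simp [hchi h', Cyc.chi_of_swap_mem (a := (e.2, e.1)) hC he]

theorem sum_chi_out_sub_sum_chi_in (hanti : ∀ a ∈ N.A, (a.2, a.1) ∉ N.A) {C : Cyc V}
    (hC : C.Proper) (hCA : ∀ e ∈ C.arcs, e ∈ N.A ∨ (e.2, e.1) ∈ N.A) (i : V) :
    (∑ a ∈ N.A.filter fun a => a.1 = i, N.chi C a)
      - ∑ a ∈ N.A.filter fun a => a.2 = i, N.chi C a = 0 := by
  let w : V × V → ℤ := fun a => (if a.1 = i then 1 else 0) - if a.2 = i then 1 else 0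
  rw [Finset.sum_filter, Finset.sum_filter, ← Finset.sum_sub_distrib]
  calc _ = ∑ a ∈ N.A, N.chi C a • w a :=
        Finset.sum_congr rfl fun a _ => by simp only [w, smul_eq_mul]; split_ifs <;> ring
    _ = ∑ e ∈ C.arcs, w e := by
        rw [N.sum_chi_smul hanti hC hCA w]
        exact Finset.sum_congr rfl fun e _ => by simp only [w]; split_ifs <;> ring
    _ = 0 := C.sum_arcs_sub_eq_zero fun v => if v = i then 1 else 0

theorem feasible_add_chi (hanti : ∀ a ∈ N.A, (a.2, a.1) ∉ N.A) {f : V × V → ℤ}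
    (hf : N.Feasible f) {C : Cyc V} (hCres : N.IsResCycle f C) (hC : C.Proper) :
    N.Feasible fun a => f a + N.chi C a := by
  refine ⟨fun a ha => ?_, fun a ha => by simp [chi, ha, hf.2.1 a ha], fun i => ?_⟩
  · show N.l a ≤ f a + N.chi C a ∧ f a + N.chi C a ≤ N.u a
    have hchi : N.chi C a = C.chi a := if_pos ha
    obtain ⟨hl, hu⟩ := hf.1 a ha
    by_cases h₁ : a ∈ C.arcs
    · have : f a < N.u a := by
        rcases N.mem_resArcs.mp (hCres a h₁) with h | h
        exacts [h.2, absurd h.1 (hanti a ha)]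
      rw [hchi, Cyc.chi_of_mem h₁]
      omega
    by_cases h₂ : (a.2, a.1) ∈ C.arcs
    · have : N.l a < f a := by
        rcases N.mem_resArcs.mp (hCres _ h₂) with h | h
        exacts [absurd h.1 (hanti a ha), h.2]
      rw [hchi, Cyc.chi_of_swap_mem hC h₂]
      omega
    · rw [hchi, Cyc.chi_of_notMem h₁ h₂]
      omega
  · rw [Finset.sum_add_distrib, Finset.sum_add_distrib, add_sub_add_comm, hf.2.2 i,
      N.sum_chi_out_sub_sum_chi_in hanti hC (fun e => hCres.mem_or_swap_mem) i, add_zero]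

theorem cost_add_chi (hanti : ∀ a ∈ N.A, (a.2, a.1) ∉ N.A) {f : V × V → ℤ} {C : Cyc V}
    (hCres : N.IsResCycle f C) (hC : C.Proper) :
    N.cost (fun a => f a + N.chi C a) = N.cost f + N.cycCost C := by
  calc N.cost (fun a => f a + N.chi C a) = N.cost f + ∑ a ∈ N.A, N.chi C a • N.c a := by
        rw [cost, cost, ← Finset.sum_add_distrib]
        refine Finset.sum_congr rfl fun a _ => ?_
        rw [zsmul_eq_mul, Int.cast_add]
        ring
    _ = N.cost f + N.cycCost C := by
        rw [N.sum_chi_smul hanti hC (fun e => hCres.mem_or_swap_mem)]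
        rfl

theorem add_chi_ne {f : V × V → ℤ} {C : Cyc V}
    (hCres : N.IsResCycle f C) (hC : C.Proper) : (fun a => f a + N.chi C a) ≠ f := by
  intro heq
  obtain ⟨e, he⟩ := C.arcs_nonempty
  rcases hCres.mem_or_swap_mem he with h | h
  · simpa [chi, h, Cyc.chi_of_mem he] using congrFun heq e
  · simpa [chi, h, Cyc.chi_of_swap_mem (a := (e.2, e.1)) hC he] using congrFun heq (e.2, e.1)

theorem cycCost_eq_sum_resRedCost (C : Cyc V) (y : V → ℝ) :
    N.cycCost C = ∑ e ∈ C.arcs, N.resRedCost y e := by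
  simp only [cycCost, resRedCost, add_sub_assoc, Finset.sum_add_distrib, C.sum_arcs_sub_eq_zero,
    add_zero]

theorem resArcs_reduced_subset (f : V × V → ℤ) (y : V → ℝ) :
    (N.reduced f y).resArcs (fun a => if a ∈ (N.reduced f y).A then f a else 0)
      ⊆ N.resArcs f := by
  intro e he
  rw [mem_resArcs] at he ⊢
  rcases he with ⟨hA, hu⟩ | ⟨hA, hl⟩
  · exact Or.inl ⟨(Finset.mem_filter.mp hA).1, by rw [if_pos hA] at hu; exact hu⟩
  · exact Or.inr ⟨(Finset.mem_filter.mp hA).1, by rw [if_pos hA] at hl; exact hl⟩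

theorem resRedCost_eq_zero_of_mem_reduced_resArcs (hanti : ∀ a ∈ N.A, (a.2, a.1) ∉ N.A)
    {f g : V × V → ℤ} {y : V → ℝ} {e : V × V} (he : e ∈ (N.reduced f y).resArcs g) :
    N.resRedCost y e = 0 := by
  rcases (N.reduced f y).mem_resArcs.mp he with ⟨hA, -⟩ | ⟨hA, -⟩
  · obtain ⟨hA, hred⟩ := Finset.mem_filter.mp hA
    rw [resRedCost, resCost, if_pos hA]
    exact hred
  · obtain ⟨hA, hred⟩ := Finset.mem_filter.mp hA
    rw [resRedCost, resCost, if_neg (hanti _ hA)]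
    rw [redCost] at hred
    linarith

end Network

theorem proper_cycle_in_reduced_gives_other_optimal_general (N : Network V) (hN : N.Wellformed)
    (f : V × V → ℤ) (hf : N.Optimal f) (y : V → ℝ)
    (C : Cyc V) (hCres :
      (N.reduced f y).IsResCycle (fun a => if a ∈ (N.reduced f y).A then f a else 0) C)
    (hCproper : C.Proper) :
    N.Optimal (fun a => f a + N.chi C a) ∧ (fun a => f a + N.chi C a) ≠ f := by
  have hC : N.IsResCycle f C := fun e he => N.resArcs_reduced_subset f y (hCres e he)
  have hcycCost : N.cycCost C = 0 := by
    rw [N.cycCost_eq_sum_resRedCost C y]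
    exact Finset.sum_eq_zero fun e he =>
      N.resRedCost_eq_zero_of_mem_reduced_resArcs hN.1 (hCres e he)
  refine ⟨⟨N.feasible_add_chi hN.1 hf.1 hC hCproper, fun g hg => ?_⟩,
    N.add_chi_ne hC hCproper⟩
  rw [N.cost_add_chi hN.1 hC hCproper, hcycCost, add_zero]
  exact hf.2 g hg

/-- Every proper directed cycle in the residual graph of the reduced network `D'` (w.r.t.
the restriction of `f` to `A'`) induces, via `f + χ(C)` (extending `χ(C)` by `0` on the
removed arcs `X`), an optimal integer flow of `D` different from `f`. -/
theorem proper_cycle_in_reduced_gives_other_optimal (N : Network V) (hN : N.Wellformed)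
    (f : V × V → ℤ) (hf : N.Optimal f) (y : V → ℝ) (hy : N.OptPotential f y)
    (C : Cyc V) (hCres :
      (N.reduced f y).IsResCycle (fun a => if a ∈ (N.reduced f y).A then f a else 0) C)
    (hCproper : C.Proper) :
    N.Optimal (fun a => f a + N.chi C a) ∧ (fun a => f a + N.chi C a) ≠ f :=
  proper_cycle_in_reduced_gives_other_optimal_general N hN f hf y C hCres hCproper
end
end
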